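/- arXiv:0806.1652 — 3 statements merged into one kernel-verified Lean document; each statement's English description precedes it below -/
import Mathlib

section
/- Let 0 < δ < 1, let η_n > 0 be a sequence with n^{1/2} η_n → ∞, and for each n let a_{n,S}*, a_{n,H}*, a_{n,A}* be the unique nonnegative solutions of Φ(n^{1/2}(a − η_n)) − Φ(n^{1/2}(−a − η_n)) = δ, Φ(n^{1/2}(a − η_n)) − Φ(−n^{1/2} a) = δ, and Φ(n^{1/2}(a − η_n)) − Φ(−n^{1/2} sqrt(a² + η_n²)) = δ, respectively. Then a_{n,S}* = η_n + n^{−1/2} Φ^{−1}(δ) + o(n^{−1/2}), a_{n,H}* = η_n + n^{−1/2} Φ^{−1}(δ) + o(n^{−1/2}), and a_{n,A}* = η_n + n^{−1/2} Φ^{−1}(δ) + o(n^{−1/2}) as n → ∞; in particular each of n^{1/2} a_{n,S}*/Φ^{−1}((1+δ)/2), n^{1/2} a_{n,H}*/Φ^{−1}((1+δ)/2), n^{1/2} a_{n,A}*/Φ^{−1}((1+δ)/2) diverges to infinity. -/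
open MeasureTheory ProbabilityTheory Filter
open scoped NNReal

/-- Standard normal cumulative distribution function Φ. -/
noncomputable def stdNormCDF (x : ℝ) : ℝ :=
  ((gaussianReal 0 1) (Set.Iic x)).toReal

/-- Soft-thresholding (LASSO) estimator with threshold η, as a function of ȳ. -/
noncomputable def softThresh (η y : ℝ) : ℝ := Real.sign y * max (|y| - η) 0

/-- Hard-thresholding estimator with threshold η, as a function of ȳ. -/
noncomputable def hardThresh (η y : ℝ) : ℝ := if η < |y| then y else 0

/-- Adaptive LASSO estimator with tuning parameter η, as a function of ȳ. -/
noncomputable def adaLasso (η y : ℝ) : ℝ := if |y| ≤ η then 0 else y - η ^ 2 / y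

/-- Coverage probability `P_{n,θ}(θ ∈ [est(ȳ) - a, est(ȳ) + b])` in the
known-variance case (σ = 1), where ȳ ~ N(θ, 1/n). -/
noncomputable def cover (n : ℕ) (est : ℝ → ℝ) (a b θ : ℝ) : ℝ :=
  ((gaussianReal θ ((n : ℝ≥0))⁻¹)
    {y : ℝ | est y - a ≤ θ ∧ θ ≤ est y + b}).toReal

/-- The inverse Φ⁻¹ of the standard normal cumulative distribution function. -/
noncomputable def stdNormCDFInv : ℝ → ℝ := Function.invFun stdNormCDF

/-!
The left-hand sides differ only in the subtracted term `Φ(c_n)`, and in all three cases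
`c_n ≤ -√n a_n`. Since `Φ(√n (a_n - η_n)) ≥ δ = Φ(Φ⁻¹ δ)`, this forces
`c_n ≤ -Φ⁻¹(δ) - √n η_n → -∞`, so `Φ(c_n) → 0` and `Φ(√n (a_n - η_n)) → δ`; as `Φ` is strictly
increasing, `√n (a_n - η_n) → Φ⁻¹(δ)`. Then `√n a_n = √n (a_n - η_n) + √n η_n → ∞`, and
`Φ⁻¹((1 + δ)/2) > 0` because `(1 + δ)/2 > 1/2 = Φ(0)`.
-/

open Topology

lemma stdNormCDF_eq_cdf : stdNormCDF = cdf (gaussianReal 0 1) := by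
  ext x
  rw [cdf_eq_real]
  rfl

lemma stdNormCDF_eq_integral (x : ℝ) :
    stdNormCDF x = ∫ t in Set.Iic x, gaussianPDFReal 0 1 t := by
  rw [stdNormCDF, gaussianReal_apply_eq_integral 0 one_ne_zero,
    ENNReal.toReal_ofReal (integral_nonneg fun t => gaussianPDFReal_nonneg 0 1 t)]

lemma stdNormCDF_sub (x y : ℝ) :
    stdNormCDF y - stdNormCDF x = ∫ t in x..y, gaussianPDFReal 0 1 t := by
  rw [stdNormCDF_eq_integral, stdNormCDF_eq_integral]
  exact intervalIntegral.integral_Iic_sub_Iic (integrable_gaussianPDFReal 0 1).integrableOn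
    (integrable_gaussianPDFReal 0 1).integrableOn

lemma strictMono_stdNormCDF : StrictMono stdNormCDF := by
  intro x y hxy
  have hpos : 0 < ∫ t in x..y, gaussianPDFReal 0 1 t :=
    intervalIntegral.intervalIntegral_pos_of_pos
      (integrable_gaussianPDFReal 0 1).intervalIntegrable
      (fun t => gaussianPDFReal_pos 0 1 t one_ne_zero) hxy
  linarith [stdNormCDF_sub x y]

lemma continuous_stdNormCDF : Continuous stdNormCDF := by
  have h : stdNormCDF = fun x => stdNormCDF 0 + ∫ t in (0 : ℝ)..x, gaussianPDFReal 0 1 t :=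
    funext fun x => by linarith [stdNormCDF_sub 0 x]
  rw [h]
  exact continuous_const.add ((integrable_gaussianPDFReal 0 1).continuous_primitive 0)

lemma stdNormCDF_zero : stdNormCDF 0 = 1 / 2 := by
  have hsymm : ∫ t in Set.Iic (0 : ℝ), gaussianPDFReal 0 1 t
      = ∫ t in Set.Ioi (0 : ℝ), gaussianPDFReal 0 1 t := by
    rw [← neg_zero, ← integral_comp_neg_Ioi]
    simp [gaussianPDFReal]
  have htotal : (∫ t in Set.Iic (0 : ℝ), gaussianPDFReal 0 1 t)
      + ∫ t in Set.Ioi (0 : ℝ), gaussianPDFReal 0 1 t = 1 := by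
    rw [intervalIntegral.integral_Iic_add_Ioi (integrable_gaussianPDFReal 0 1).integrableOn
      (integrable_gaussianPDFReal 0 1).integrableOn]
    exact integral_gaussianPDFReal_eq_one 0 one_ne_zero
  rw [stdNormCDF_eq_integral]
  linarith

lemma stdNormCDF_nonneg (x : ℝ) : 0 ≤ stdNormCDF x := ENNReal.toReal_nonneg

lemma tendsto_stdNormCDF_atBot : Tendsto stdNormCDF atBot (𝓝 0) :=
  stdNormCDF_eq_cdf ▸ tendsto_cdf_atBot _

lemma tendsto_stdNormCDF_atTop : Tendsto stdNormCDF atTop (𝓝 1) :=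
  stdNormCDF_eq_cdf ▸ tendsto_cdf_atTop _

lemma stdNormCDF_stdNormCDFInv {p : ℝ} (h0 : 0 < p) (h1 : p < 1) :
    stdNormCDF (stdNormCDFInv p) = p := by
  apply Function.invFun_eq
  obtain ⟨x₀, hx₀⟩ := (tendsto_stdNormCDF_atBot.eventually_lt_const h0).exists
  obtain ⟨x₁, hx₁⟩ := (tendsto_stdNormCDF_atTop.eventually_const_lt h1).exists
  have hx : x₀ ≤ x₁ := (strictMono_stdNormCDF.lt_iff_lt.mp (hx₀.trans hx₁)).le
  obtain ⟨x, -, hx⟩ := intermediate_value_Icc hx continuous_stdNormCDF.continuousOn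
    ⟨hx₀.le, hx₁.le⟩
  exact ⟨x, hx⟩

lemma stdNormCDFInv_pos {p : ℝ} (h0 : 1 / 2 < p) (h1 : p < 1) : 0 < stdNormCDFInv p := by
  rw [← strictMono_stdNormCDF.lt_iff_lt, stdNormCDF_zero,
    stdNormCDF_stdNormCDFInv (by linarith) h1]
  exact h0

lemma tendsto_of_tendsto_stdNormCDF {α : Type*} {l : Filter α} {x : α → ℝ} {t : ℝ}
    (h : Tendsto (fun i => stdNormCDF (x i)) l (𝓝 (stdNormCDF t))) : Tendsto x l (𝓝 t) := by
  rw [tendsto_order]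
  refine ⟨fun a ha => ?_, fun a ha => ?_⟩
  · filter_upwards [h.eventually_const_lt (strictMono_stdNormCDF ha)] with i hi
    exact strictMono_stdNormCDF.lt_iff_lt.mp hi
  · filter_upwards [h.eventually_lt_const (strictMono_stdNormCDF ha)] with i hi
    exact strictMono_stdNormCDF.lt_iff_lt.mp hi

lemma tendsto_stdNormCDFInv_of_stdNormCDF_sub_eq {α : Type*} {l : Filter α} {δ : ℝ}
    (hδ0 : 0 < δ) (hδ1 : δ < 1) {x c y : α → ℝ} (hy : Tendsto y l atTop)
    (heq : ∀ᶠ i in l, stdNormCDF (x i) - stdNormCDF (c i) = δ)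
    (hc : ∀ᶠ i in l, c i ≤ -(x i + y i)) :
    Tendsto x l (𝓝 (stdNormCDFInv δ)) := by
  set L := stdNormCDFInv δ
  have hL : stdNormCDF L = δ := stdNormCDF_stdNormCDFInv hδ0 hδ1
  have hx : ∀ᶠ i in l, L ≤ x i := heq.mono fun i hi => by
    rw [← strictMono_stdNormCDF.le_iff_le, hL]
    linarith [stdNormCDF_nonneg (c i)]
  have hc_atBot : Tendsto c l atBot := by
    refine tendsto_atBot_mono' l ?_
      (tendsto_neg_atTop_atBot.comp (tendsto_atTop_add_const_left l L hy))
    filter_upwards [hx, hc] with i hxi hci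
    simp only [Function.comp_apply]
    linarith
  have hΦc : Tendsto (fun i => stdNormCDF (c i)) l (𝓝 0) :=
    tendsto_stdNormCDF_atBot.comp hc_atBot
  have hΦx : Tendsto (fun i => stdNormCDF (x i)) l (𝓝 (stdNormCDF L)) := by
    rw [hL, ← add_zero δ]
    refine (hΦc.const_add δ).congr' ?_
    filter_upwards [heq] with i hi
    linarith
  exact tendsto_of_tendsto_stdNormCDF hΦx

lemma tendsto_sqrt_mul_sub_of_stdNormCDF_sub_eq {δ : ℝ} (hδ0 : 0 < δ) (hδ1 : δ < 1)
    {η a c : ℕ → ℝ}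
    (hηe : Tendsto (fun n : ℕ => Real.sqrt n * η n) atTop atTop)
    (heq : ∀ n : ℕ, 1 ≤ n → stdNormCDF (Real.sqrt n * (a n - η n)) - stdNormCDF (c n) = δ)
    (hc : ∀ᶠ n in atTop, c n ≤ -(Real.sqrt n * a n)) :
    Tendsto (fun n : ℕ => Real.sqrt n * (a n - η n)) atTop (𝓝 (stdNormCDFInv δ)) ∧
    Tendsto (fun n : ℕ => Real.sqrt n * a n / stdNormCDFInv ((1 + δ) / 2)) atTop atTop := by
  have hlim := tendsto_stdNormCDFInv_of_stdNormCDF_sub_eq hδ0 hδ1 hηe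
    (eventually_atTop.2 ⟨1, heq⟩) (hc.mono fun n hn => by linarith)
  refine ⟨hlim, Tendsto.atTop_div_const (stdNormCDFInv_pos (by linarith) (by linarith)) ?_⟩
  exact (hlim.add_atTop hηe).congr fun n => by ring

theorem stmt_11_general (δ : ℝ) (hδ0 : 0 < δ) (hδ1 : δ < 1) (η : ℕ → ℝ)
    (hηe : Tendsto (fun n : ℕ => Real.sqrt n * η n) atTop atTop)
    (aS aH aA : ℕ → ℝ)
    (heqS : ∀ n : ℕ, 1 ≤ n →
      stdNormCDF (Real.sqrt n * (aS n - η n)) -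
        stdNormCDF (Real.sqrt n * (-aS n - η n)) = δ)
    (heqH : ∀ n : ℕ, 1 ≤ n →
      stdNormCDF (Real.sqrt n * (aH n - η n)) - stdNormCDF (-(Real.sqrt n * aH n)) = δ)
    (heqA : ∀ n : ℕ, 1 ≤ n →
      stdNormCDF (Real.sqrt n * (aA n - η n)) -
        stdNormCDF (-(Real.sqrt n * Real.sqrt (aA n ^ 2 + η n ^ 2))) = δ) :
    -- `a* = η_n + n^{-1/2} Φ⁻¹(δ) + o(n^{-1/2})`, i.e. `√n (a* - η_n) → Φ⁻¹(δ)`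
    Tendsto (fun n : ℕ => Real.sqrt n * (aS n - η n)) atTop (nhds (stdNormCDFInv δ)) ∧
    Tendsto (fun n : ℕ => Real.sqrt n * (aH n - η n)) atTop (nhds (stdNormCDFInv δ)) ∧
    Tendsto (fun n : ℕ => Real.sqrt n * (aA n - η n)) atTop (nhds (stdNormCDFInv δ)) ∧
    -- the ratios to the half-length `n^{-1/2} Φ⁻¹((1+δ)/2)` of the standard
    -- interval diverge to infinity
    Tendsto (fun n : ℕ => Real.sqrt n * aS n / stdNormCDFInv ((1 + δ) / 2)) atTop atTop ∧
    Tendsto (fun n : ℕ => Real.sqrt n * aH n / stdNormCDFInv ((1 + δ) / 2)) atTop atTop ∧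
    Tendsto (fun n : ℕ => Real.sqrt n * aA n / stdNormCDFInv ((1 + δ) / 2)) atTop atTop := by
  have hcS : ∀ᶠ n : ℕ in atTop, Real.sqrt n * (-aS n - η n) ≤ -(Real.sqrt n * aS n) := by
    filter_upwards [hηe.eventually_ge_atTop 0] with n hn
    linarith
  have hcA : ∀ n : ℕ,
      -(Real.sqrt n * Real.sqrt (aA n ^ 2 + η n ^ 2)) ≤ -(Real.sqrt n * aA n) := fun n => by
    have : aA n ≤ Real.sqrt (aA n ^ 2 + η n ^ 2) :=
      (le_abs_self _).trans (Real.abs_le_sqrt (le_add_of_nonneg_right (sq_nonneg _)))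
    linarith [mul_le_mul_of_nonneg_left this (Real.sqrt_nonneg n)]
  obtain ⟨hS, hS'⟩ := tendsto_sqrt_mul_sub_of_stdNormCDF_sub_eq hδ0 hδ1 hηe heqS hcS
  obtain ⟨hH, hH'⟩ := tendsto_sqrt_mul_sub_of_stdNormCDF_sub_eq hδ0 hδ1 hηe heqH
    (.of_forall fun _ => le_rfl)
  obtain ⟨hA, hA'⟩ := tendsto_sqrt_mul_sub_of_stdNormCDF_sub_eq hδ0 hδ1 hηe heqA
    (.of_forall hcA)
  exact ⟨hS, hH, hA, hS', hH', hA'⟩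

/-- Asymptotic behavior of the half-lengths of the shortest δ-level intervals in the
sparse-tuning regime `√n η_n → ∞`: `a* = η_n + n^{-1/2} Φ⁻¹(δ) + o(n^{-1/2})`, and the
ratio to the half-length of the standard interval diverges. -/
theorem stmt_11 (δ : ℝ) (hδ0 : 0 < δ) (hδ1 : δ < 1) (η : ℕ → ℝ) (hη : ∀ n, 0 < η n)
    (hηe : Tendsto (fun n : ℕ => Real.sqrt n * η n) atTop atTop)
    (aS aH aA : ℕ → ℝ)
    (haS : ∀ n, 0 ≤ aS n) (haH : ∀ n, 0 ≤ aH n) (haA : ∀ n, 0 ≤ aA n)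
    (heqS : ∀ n : ℕ, 1 ≤ n →
      stdNormCDF (Real.sqrt n * (aS n - η n)) -
        stdNormCDF (Real.sqrt n * (-aS n - η n)) = δ)
    (heqH : ∀ n : ℕ, 1 ≤ n →
      stdNormCDF (Real.sqrt n * (aH n - η n)) - stdNormCDF (-(Real.sqrt n * aH n)) = δ)
    (heqA : ∀ n : ℕ, 1 ≤ n →
      stdNormCDF (Real.sqrt n * (aA n - η n)) -
        stdNormCDF (-(Real.sqrt n * Real.sqrt (aA n ^ 2 + η n ^ 2))) = δ) :
    -- `a* = η_n + n^{-1/2} Φ⁻¹(δ) + o(n^{-1/2})`, i.e. `√n (a* - η_n) → Φ⁻¹(δ)`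
    Tendsto (fun n : ℕ => Real.sqrt n * (aS n - η n)) atTop (nhds (stdNormCDFInv δ)) ∧
    Tendsto (fun n : ℕ => Real.sqrt n * (aH n - η n)) atTop (nhds (stdNormCDFInv δ)) ∧
    Tendsto (fun n : ℕ => Real.sqrt n * (aA n - η n)) atTop (nhds (stdNormCDFInv δ)) ∧
    -- the ratios to the half-length `n^{-1/2} Φ⁻¹((1+δ)/2)` of the standard
    -- interval diverge to infinity
    Tendsto (fun n : ℕ => Real.sqrt n * aS n / stdNormCDFInv ((1 + δ) / 2)) atTop atTop ∧
    Tendsto (fun n : ℕ => Real.sqrt n * aH n / stdNormCDFInv ((1 + δ) / 2)) atTop atTop ∧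
    Tendsto (fun n : ℕ => Real.sqrt n * aA n / stdNormCDFInv ((1 + δ) / 2)) atTop atTop :=
  stmt_11_general δ hδ0 hδ1 η hηe aS aH aA heqS heqH heqA
end

section
/- Suppose η_n > 0 is a sequence with η_n → 0 and n^{1/2} η_n → ∞, let θ̂ be any one of the estimators θ̂_S(η_n), θ̂_H(η_n), θ̂_A(η_n), let d be a real number, and define D_n = [θ̂ − d η_n, θ̂ + d η_n]. If d > 1, then lim_{n→∞} inf_{θ∈ℝ} P_{n,θ}(θ ∈ D_n) = 1; if d < 1, then lim_{n→∞} inf_{θ∈ℝ} P_{n,θ}(θ ∈ D_n) = 0. -/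
/-!
All three estimators are scale equivariant, `est η y = η * est 1 (y / η)`, and the normalized
error `|est 1 x - x|` is at most `1`, while for every `d < 1` it exceeds `d` on a whole
neighbourhood of some point `c`. As `ȳ - θ` has variance `1/n`, Chebyshev's inequality bounds
`P_{n,θ}(|ȳ - θ| ≥ κ η_n)` by `1 / (κ √n η_n)²`, uniformly in `θ`, and this tends to `0`.
For `d > 1` the interval can miss `θ` only if `|ȳ - θ| ≥ (d - 1) η_n`; for `d < 1` and
`θ = c η_n` it can contain `θ` only if `|ȳ - θ| ≥ ε η_n`, with `ε` the radius of that neighbourhood.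
-/

open MeasureTheory ProbabilityTheory Filter
open scoped NNReal

open Topology

lemma gaussianReal_real_tail_le (θ : ℝ) (v : ℝ≥0) {r : ℝ} (hr : 0 < r) :
    (gaussianReal θ v).real {y | r ≤ |y - θ|} ≤ v / r ^ 2 := by
  have h := meas_ge_le_variance_div_sq (memLp_id_gaussianReal' (μ := θ) (v := v) 2 (by simp)) hr
  simp only [id, integral_id_gaussianReal, variance_id_gaussianReal] at h
  exact ENNReal.toReal_le_of_le_ofReal (by positivity) h

lemma one_sub_tail_le_cover (n : ℕ) (est : ℝ → ℝ) (a b θ r : ℝ)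
    (h : ∀ y, |y - θ| < r → est y - a ≤ θ ∧ θ ≤ est y + b) :
    1 - (gaussianReal θ (n : ℝ≥0)⁻¹).real {y | r ≤ |y - θ|} ≤ cover n est a b θ := by
  have hmeas : MeasurableSet {y : ℝ | r ≤ |y - θ|} :=
    measurableSet_le measurable_const (by fun_prop)
  rw [← probReal_compl_eq_one_sub hmeas]
  refine measureReal_mono fun y hy => h y ?_
  simpa using hy

lemma cover_le_tail (n : ℕ) (est : ℝ → ℝ) (a b θ r : ℝ)
    (h : ∀ y, est y - a ≤ θ ∧ θ ≤ est y + b → r ≤ |y - θ|) :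
    cover n est a b θ ≤ (gaussianReal θ (n : ℝ≥0)⁻¹).real {y | r ≤ |y - θ|} :=
  measureReal_mono h

lemma tendsto_inv_div_sq_of_tendsto_sqrt_mul {η : ℕ → ℝ}
    (hη : Tendsto (fun n : ℕ => Real.sqrt n * η n) atTop atTop) {κ : ℝ} (hκ : 0 < κ) :
    Tendsto (fun n : ℕ => (((n : ℝ≥0)⁻¹ : ℝ≥0) : ℝ) / (κ * η n) ^ 2) atTop (𝓝 0) := by
  have h := tendsto_inv_atTop_zero.comp
    ((tendsto_pow_atTop two_ne_zero).comp (hη.const_mul_atTop hκ))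
  refine h.congr fun n => ?_
  simp only [Function.comp_apply, mul_pow, Real.sq_sqrt (Nat.cast_nonneg n)]
  push_cast
  ring

lemma bddBelow_range_cover (n : ℕ) (est : ℝ → ℝ) (a b : ℝ) :
    BddBelow (Set.range (cover n est a b)) :=
  ⟨0, Set.forall_mem_range.2 fun _ => measureReal_nonneg⟩

structure IsThresholdingRule (est : ℝ → ℝ → ℝ) : Prop where
  apply_eq_mul_apply_one_div : ∀ {η : ℝ}, 0 < η → ∀ y, est η y = η * est 1 (y / η)
  abs_apply_one_sub_le : ∀ x, |est 1 x - x| ≤ 1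
  exists_lt_abs_apply_one_sub : ∀ {d : ℝ}, d < 1 → ∃ c, d < |est 1 c - c| ∧ ContinuousAt (est 1) c

lemma isThresholdingRule_softThresh : IsThresholdingRule softThresh where
  apply_eq_mul_apply_one_div {η} hη y := by
    have hsign : Real.sign (y / η) = Real.sign y := by
      rcases lt_trichotomy y 0 with hy | rfl | hy
      · rw [Real.sign_of_neg hy, Real.sign_of_neg (div_neg_of_neg_of_pos hy hη)]
      · simp
      · rw [Real.sign_of_pos hy, Real.sign_of_pos (div_pos hy hη)]
    have hmax : max (|y| - η) 0 = η * max (|y / η| - 1) 0 := by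
      rw [mul_max_of_nonneg _ _ hη.le, mul_zero, mul_sub, abs_div, abs_of_pos hη,
        mul_div_cancel₀ _ hη.ne', mul_one]
    rw [softThresh, softThresh, hsign, hmax]
    ring
  abs_apply_one_sub_le x := by
    unfold softThresh
    rcases lt_trichotomy x 0 with hx | rfl | hx
    · rw [Real.sign_of_neg hx, abs_of_neg hx, abs_le]
      constructor <;> cases max_cases (-x - 1) 0 <;> linarith
    · simp
    · rw [Real.sign_of_pos hx, abs_of_pos hx, abs_le]
      constructor <;> cases max_cases (x - 1) 0 <;> linarith
  exists_lt_abs_apply_one_sub {d} hd := by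
    refine ⟨2, ?_, ?_⟩
    · have h2 : softThresh 1 2 = 1 := by norm_num [softThresh, Real.sign_of_pos]
      rw [h2]
      norm_num
      linarith
    · have h : ∀ᶠ x in 𝓝 (2 : ℝ), x - 1 = softThresh 1 x := by
        filter_upwards [Ioi_mem_nhds (by norm_num : (1 : ℝ) < 2)] with x hx
        have hx0 : 0 < x := by linarith [Set.mem_Ioi.1 hx]
        rw [softThresh, Real.sign_of_pos hx0, abs_of_pos hx0,
          max_eq_left (by linarith [Set.mem_Ioi.1 hx])]
        ring
      exact (continuousAt_id.sub continuousAt_const).congr h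

lemma isThresholdingRule_hardThresh : IsThresholdingRule hardThresh where
  apply_eq_mul_apply_one_div {η} hη y := by
    have hiff : 1 < |y / η| ↔ η < |y| := by rw [abs_div, abs_of_pos hη, one_lt_div hη]
    simp only [hardThresh, hiff]
    split_ifs
    · rw [mul_div_cancel₀ _ hη.ne']
    · rw [mul_zero]
  abs_apply_one_sub_le x := by
    rw [hardThresh]
    split_ifs with h
    · simp
    · simpa using not_lt.1 h
  exists_lt_abs_apply_one_sub {d} hd := by
    obtain ⟨c, hmc, hc1⟩ := exists_between (max_lt hd one_pos)
    have hc0 : 0 < c := (le_max_right d 0).trans_lt hmc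
    have hzero : ∀ x : ℝ, x ∈ Set.Ioo (-1) 1 → hardThresh 1 x = 0 := fun x hx => by
      rw [hardThresh, if_neg (not_lt.2 (abs_le.2 ⟨hx.1.le, hx.2.le⟩))]
    have hcmem : c ∈ Set.Ioo (-1 : ℝ) 1 := ⟨by linarith, hc1⟩
    refine ⟨c, ?_, ?_⟩
    · rw [hzero c hcmem, zero_sub, abs_neg, abs_of_pos hc0]
      exact (le_max_left d 0).trans_lt hmc
    · refine (continuousAt_const (y := (0 : ℝ))).congr ?_
      filter_upwards [Ioo_mem_nhds hcmem.1 hcmem.2] with x hx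
      exact (hzero x hx).symm

lemma isThresholdingRule_adaLasso : IsThresholdingRule adaLasso where
  apply_eq_mul_apply_one_div {η} hη y := by
    have hiff : |y / η| ≤ 1 ↔ |y| ≤ η := by rw [abs_div, abs_of_pos hη, div_le_one hη]
    simp only [adaLasso, hiff]
    split_ifs with h
    · rw [mul_zero]
    · have hy : y ≠ 0 := by
        rintro rfl
        exact h (by simpa using hη.le)
      field_simp
  abs_apply_one_sub_le x := by
    rw [adaLasso]
    split_ifs with h
    · simpa using h
    · rw [one_pow, sub_sub_cancel_left, abs_neg, abs_div, abs_one]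
      exact div_le_one_of_le₀ (not_le.1 h).le (abs_nonneg x)
  exists_lt_abs_apply_one_sub {d} hd := by
    obtain ⟨t, hmt, ht1⟩ := exists_between (max_lt hd one_pos)
    have ht0 : 0 < t := (le_max_right d 0).trans_lt hmt
    have hc1 : 1 < t⁻¹ := one_lt_inv₀ ht0 |>.2 ht1
    have hformula : ∀ x : ℝ, x ∈ Set.Ioi 1 → adaLasso 1 x = x - 1 ^ 2 / x := fun x hx => by
      have hx : (1 : ℝ) < x := hx
      rw [adaLasso, if_neg (not_le.2 (hx.trans_le (le_abs_self x)))]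
    refine ⟨t⁻¹, ?_, ?_⟩
    · rw [hformula _ hc1, one_pow, sub_sub_cancel_left, abs_neg, one_div, inv_inv, abs_of_pos ht0]
      exact (le_max_left d 0).trans_lt hmt
    · have hcont : ContinuousAt (fun x : ℝ => x - 1 ^ 2 / x) t⁻¹ :=
        continuousAt_id.sub (continuousAt_const.div continuousAt_id (by positivity))
      refine hcont.congr ?_
      filter_upwards [Ioi_mem_nhds hc1] with x hx
      exact (hformula x hx).symm

lemma abs_mul_sub_eq_mul_abs_sub_div {η : ℝ} (hη : 0 < η) (a b : ℝ) :
    |η * a - b| = η * |a - b / η| := by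
  rw [← abs_of_pos hη, ← abs_mul, abs_of_pos hη, mul_sub, mul_div_cancel₀ _ hη.ne']

namespace IsThresholdingRule

variable {est : ℝ → ℝ → ℝ} (hest : IsThresholdingRule est)
include hest

lemma abs_apply_sub_le {η : ℝ} (hη : 0 < η) (y : ℝ) : |est η y - y| ≤ η := by
  rw [hest.apply_eq_mul_apply_one_div hη, abs_mul_sub_eq_mul_abs_sub_div hη]
  exact mul_le_of_le_one_right hη.le (hest.abs_apply_one_sub_le _)

lemma covers_of_abs_sub_lt {η d θ y : ℝ} (hη : 0 < η) (h : |y - θ| < (d - 1) * η) :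
    est η y - d * η ≤ θ ∧ θ ≤ est η y + d * η := by
  have hdist : |est η y - θ| ≤ d * η := calc
    |est η y - θ| ≤ |est η y - y| + |y - θ| := abs_sub_le _ _ _
    _ ≤ η + (d - 1) * η := add_le_add (hest.abs_apply_sub_le hη y) h.le
    _ = d * η := by ring
  constructor <;> linarith [abs_sub_le_iff.1 hdist]

lemma exists_le_abs_sub_of_covers {d : ℝ} (hd : d < 1) :
    ∃ c ε : ℝ, 0 < ε ∧ ∀ {η : ℝ}, 0 < η → ∀ y,
      est η y - d * η ≤ c * η ∧ c * η ≤ est η y + d * η → ε * η ≤ |y - c * η| := by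
  obtain ⟨c, hfar, hcont⟩ := hest.exists_lt_abs_apply_one_sub hd
  obtain ⟨ε, hε, hball⟩ := Metric.eventually_nhds_iff.1
    ((hcont.sub continuousAt_const).abs.eventually_const_lt hfar)
  refine ⟨c, ε, hε, fun {η} hη y hcov => ?_⟩
  by_contra! hclose
  rw [abs_sub_comm, mul_comm c, abs_mul_sub_eq_mul_abs_sub_div hη, mul_comm ε] at hclose
  have hy : dist (y / η) c < ε := by
    rw [Real.dist_eq, abs_sub_comm]
    exact lt_of_mul_lt_mul_left hclose hη.le
  have hmiss : d * η < |est η y - c * η| := by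
    rw [hest.apply_eq_mul_apply_one_div hη, abs_mul_sub_eq_mul_abs_sub_div hη,
      mul_div_cancel_right₀ _ hη.ne', mul_comm d]
    exact mul_lt_mul_of_pos_left (hball hy) hη
  rcases lt_abs.1 hmiss with h | h <;> linarith [hcov.1, hcov.2]

variable {η : ℕ → ℝ} (hη : ∀ n, 0 < η n)
  (hηsparse : Tendsto (fun n : ℕ => Real.sqrt n * η n) atTop atTop)
include hη hηsparse

theorem tendsto_iInf_cover_of_one_lt {d : ℝ} (hd : 1 < d) :
    Tendsto (fun n : ℕ => ⨅ θ : ℝ, cover n (est (η n)) (d * η n) (d * η n) θ) atTop (𝓝 1) := by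
  have hκ : 0 < d - 1 := sub_pos.2 hd
  have hlower := tendsto_const_nhds (x := (1 : ℝ)).sub
    (tendsto_inv_div_sq_of_tendsto_sqrt_mul hηsparse hκ)
  rw [sub_zero] at hlower
  refine tendsto_of_tendsto_of_tendsto_of_le_of_le hlower tendsto_const_nhds
    (fun n => le_ciInf fun θ => ?_) (fun n => (ciInf_le (bddBelow_range_cover _ _ _ _) 0).trans ?_)
  · refine (sub_le_sub_left (gaussianReal_real_tail_le θ _ (mul_pos hκ (hη n))) 1).trans ?_
    exact one_sub_tail_le_cover n _ _ _ θ _ fun y hy => hest.covers_of_abs_sub_lt (hη n) hy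
  · exact measureReal_le_one

theorem tendsto_iInf_cover_of_lt_one {d : ℝ} (hd : d < 1) :
    Tendsto (fun n : ℕ => ⨅ θ : ℝ, cover n (est (η n)) (d * η n) (d * η n) θ) atTop (𝓝 0) := by
  obtain ⟨c, ε, hε, hfar⟩ := hest.exists_le_abs_sub_of_covers hd
  refine tendsto_of_tendsto_of_tendsto_of_le_of_le tendsto_const_nhds
    (tendsto_inv_div_sq_of_tendsto_sqrt_mul hηsparse hε)
    (fun n => le_ciInf fun θ => measureReal_nonneg)
    (fun n => (ciInf_le (bddBelow_range_cover _ _ _ _) (c * η n)).trans ?_)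
  exact (cover_le_tail n _ _ _ _ _ (hfar (hη n))).trans
    (gaussianReal_real_tail_le _ _ (mul_pos hε (hη n)))

end IsThresholdingRule

theorem stmt_12_general (η : ℕ → ℝ) (hη : ∀ n, 0 < η n)
    (hηsparse : Tendsto (fun n : ℕ => Real.sqrt n * η n) atTop atTop)
    (est : ℝ → ℝ → ℝ)
    (hest : est = softThresh ∨ est = hardThresh ∨ est = adaLasso)
    (d : ℝ) :
    (1 < d →
      Tendsto (fun n : ℕ => ⨅ θ : ℝ, cover n (est (η n)) (d * η n) (d * η n) θ)
        atTop (nhds 1)) ∧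
    (d < 1 →
      Tendsto (fun n : ℕ => ⨅ θ : ℝ, cover n (est (η n)) (d * η n) (d * η n) θ)
        atTop (nhds 0)) := by
  have hrule : IsThresholdingRule est := by
    rcases hest with rfl | rfl | rfl
    exacts [isThresholdingRule_softThresh, isThresholdingRule_hardThresh,
      isThresholdingRule_adaLasso]
  exact ⟨hrule.tendsto_iInf_cover_of_one_lt hη hηsparse,
    hrule.tendsto_iInf_cover_of_lt_one hη hηsparse⟩

/-- Proposition 4: in the sparse-tuning regime (`η_n → 0`, `√n η_n → ∞`), the interval
`D_n = [θ̂ - d η_n, θ̂ + d η_n]` based on soft-thresholding, hard-thresholding, or the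
adaptive LASSO has infimal coverage probability converging to 1 if `d > 1` and to 0 if
`d < 1`. -/
theorem stmt_12 (η : ℕ → ℝ) (hη : ∀ n, 0 < η n)
    (hη0 : Tendsto η atTop (nhds 0))
    (hηsparse : Tendsto (fun n : ℕ => Real.sqrt n * η n) atTop atTop)
    (est : ℝ → ℝ → ℝ)
    (hest : est = softThresh ∨ est = hardThresh ∨ est = adaLasso)
    (d : ℝ) :
    (1 < d →
      Tendsto (fun n : ℕ => ⨅ θ : ℝ, cover n (est (η n)) (d * η n) (d * η n) θ)
        atTop (nhds 1)) ∧
    (d < 1 →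
      Tendsto (fun n : ℕ => ⨅ θ : ℝ, cover n (est (η n)) (d * η n) (d * η n) θ)
        atTop (nhds 0)) :=
  stmt_12_general η hη hηsparse est hest d
end

section
/- Suppose α, β, γ, and δ are real numbers satisfying α ≤ β, γ ≤ δ, and β − α ≥ δ − γ. If either 0 ≤ α ≤ −δ, or both γ ≤ α ≤ 0 and γ ≤ −β, then Φ(β) − Φ(α) ≥ Φ(δ) − Φ(γ). -/
open MeasureTheory ProbabilityTheory
open scoped NNReal

namespace StdAux

noncomputable def φ : ℝ → ℝ := gaussianPDFReal 0 1

lemma φ_nonneg (x : ℝ) : 0 ≤ φ x := gaussianPDFReal_nonneg 0 1 x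

lemma φ_integrable : Integrable φ := integrable_gaussianPDFReal 0 1

lemma φ_even (x : ℝ) : φ (-x) = φ x := by
  simp [φ, gaussianPDFReal, neg_sq]

lemma φ_anti {s t : ℝ} (h : |s| ≤ |t|) : φ t ≤ φ s := by
  have hst : s ^ 2 ≤ t ^ 2 := by
    rw [← sq_abs s, ← sq_abs t]
    exact pow_le_pow_left₀ (abs_nonneg s) h 2
  simp only [φ, gaussianPDFReal, NNReal.coe_one, mul_one, sub_zero]
  gcongr

lemma cdf_eq (x : ℝ) : stdNormCDF x = ∫ t in Set.Iic x, φ t := by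
  rw [stdNormCDF, gaussianReal_apply_eq_integral 0 one_ne_zero,
    ENNReal.toReal_ofReal (setIntegral_nonneg measurableSet_Iic
      fun t _ => gaussianPDFReal_nonneg 0 1 t)]
  rfl

lemma diff (a b : ℝ) (hab : a ≤ b) :
    stdNormCDF b - stdNormCDF a = ∫ t in a..b, φ t := by
  rw [cdf_eq, cdf_eq, intervalIntegral.integral_of_le hab]
  have h : ∫ t in Set.Iic b, φ t
      = (∫ t in Set.Iic a, φ t) + ∫ t in Set.Ioc a b, φ t := by
    rw [← setIntegral_union (Set.Iic_disjoint_Ioc le_rfl) measurableSet_Ioc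
      φ_integrable.integrableOn φ_integrable.integrableOn, Set.Iic_union_Ioc_eq_Iic hab]
  linarith

lemma cdf_mono {a b : ℝ} (hab : a ≤ b) : stdNormCDF a ≤ stdNormCDF b := by
  have h := diff a b hab
  have h0 : 0 ≤ ∫ t in a..b, φ t :=
    intervalIntegral.integral_nonneg hab fun t _ => φ_nonneg t
  linarith

lemma g_sym (x L : ℝ) : ∫ t in (-L - x)..(-x), φ t = ∫ t in x..(x + L), φ t := by
  have h : ∫ t in x..(x + L), φ t = ∫ t in x..(x + L), φ (-t) := by
    simp [φ_even]
  rw [h, intervalIntegral.integral_comp_neg]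
  rw [show -(x + L) = -L - x by ring]

lemma shift_le {L a c : ℝ} (hL : 0 ≤ L) (ha : -(L / 2) ≤ a) (hac : a ≤ c) :
    ∫ t in c..(c + L), φ t ≤ ∫ t in a..(a + L), φ t := by
  have hint : ∀ p q : ℝ, IntervalIntegrable φ volume p q :=
    fun p q => φ_integrable.intervalIntegrable
  have hint' : IntervalIntegrable (fun t => φ (t + L)) volume a c := by
    have : Integrable (fun t => φ (t + L)) := by
      have := φ_integrable.comp_add_right L
      exact this
    exact this.intervalIntegrable
  have key : ∫ t in a..c, φ (t + L) ≤ ∫ t in a..c, φ t := by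
    apply intervalIntegral.integral_mono_on hac hint' (hint a c)
    intro t ht
    apply φ_anti
    have ht1 : -(L / 2) ≤ t := le_trans ha ht.1
    have habs : |t + L| = t + L := abs_of_nonneg (by linarith)
    rw [habs]
    exact abs_le.mpr ⟨by linarith, by linarith⟩
  have h1 : (∫ t in a..c, φ t) + ∫ t in c..(c + L), φ t
      = (∫ t in a..(a + L), φ t) + ∫ t in (a + L)..(c + L), φ t := by
    rw [intervalIntegral.integral_add_adjacent_intervals (hint a c) (hint c (c + L)),
      intervalIntegral.integral_add_adjacent_intervals (hint a (a + L)) (hint (a + L) (c + L))]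
  have h2 : ∫ t in (a + L)..(c + L), φ t = ∫ t in a..c, φ (t + L) :=
    (intervalIntegral.integral_comp_add_right φ L).symm
  linarith

end StdAux

open StdAux in
/-- Lemma 2: if `α ≤ β`, `γ ≤ δ`, `β - α ≥ δ - γ`, and either `0 ≤ α ≤ -δ` or both
`γ ≤ α ≤ 0` and `γ ≤ -β`, then `Φ(β) - Φ(α) ≥ Φ(δ) - Φ(γ)`. -/
theorem stmt_19 (α β γ δ : ℝ) (h1 : α ≤ β) (h2 : γ ≤ δ) (h3 : β - α ≥ δ - γ)
    (h4 : (0 ≤ α ∧ α ≤ -δ) ∨ (γ ≤ α ∧ α ≤ 0 ∧ γ ≤ -β)) :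
    stdNormCDF β - stdNormCDF α ≥ stdNormCDF δ - stdNormCDF γ := by
  set L : ℝ := δ - γ with hLdef
  have hL : 0 ≤ L := by linarith
  -- basic inequalities holding in both cases
  have hγα : γ ≤ α := by rcases h4 with ⟨h4a, h4b⟩ | ⟨h4a, _, _⟩ <;> linarith
  have hαδ : α ≤ -δ := by rcases h4 with ⟨h4a, h4b⟩ | ⟨h4a, h4b, h4c⟩ <;> linarith
  set a' : ℝ := max α (-L - α) with ha'def
  have ha'1 : -(L / 2) ≤ a' := by
    rcases le_total α (-(L / 2)) with h | h
    · exact le_trans (by linarith : -(L / 2) ≤ -L - α) (le_max_right _ _)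
    · exact le_trans h (le_max_left _ _)
  have ha'2 : a' ≤ -δ := max_le hαδ (by rw [hLdef]; ring_nf; linarith)
  -- right side = mass of [-δ, -γ] = interval of length L starting at -δ
  have e1 : stdNormCDF δ - stdNormCDF γ = ∫ t in (-δ)..(-δ + L), φ t := by
    rw [diff γ δ h2]
    have := g_sym γ L
    rw [show -L - γ = -δ by rw [hLdef]; ring, show γ + L = δ by rw [hLdef]; ring] at this
    rw [← this, show -δ + L = -γ by rw [hLdef]; ring]
  have e2 : ∫ t in (-δ)..(-δ + L), φ t ≤ ∫ t in a'..(a' + L), φ t :=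
    shift_le hL ha'1 ha'2
  have e3 : ∫ t in a'..(a' + L), φ t = ∫ t in α..(α + L), φ t := by
    rcases max_choice α (-L - α) with h | h
    · rw [ha'def, h]
    · rw [ha'def, h, show -L - α + L = -α by ring, g_sym α L]
  have e4 : (∫ t in α..(α + L), φ t) = stdNormCDF (α + L) - stdNormCDF α :=
    (diff α (α + L) (by linarith)).symm
  have e5 : stdNormCDF (α + L) ≤ stdNormCDF β := cdf_mono (by linarith)
  linarith
end
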